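/- arXiv:1711.04001 — 2 statements merged into one kernel-verified Lean document; each statement's English description precedes it below -/
import Mathlib

section
/- Let T be a hierarchical data tree, R a table, and i a column index. The automaton A = ConstructDFA(T,R,i) accepts a column extraction program π if and only if π overapproximates column(R,i) on T, i.e., every value in column(R,i) equals n.data for some node n ∈ [[π]]_{{root(T)},T}. -/
/-- A hierarchical data tree (HDT): a finite rooted tree in which every node
carries a tag, a position (it is the pos'th child with its tag under its
parent), and a data value. -/
structure HDT where
  /-- the (finite) type of nodes -/
  Node : Type
  fintypeNode : Fintype Node
  root : Node
  parent : Node → Option Node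
  tag : Node → String
  pos : Node → Nat
  data : Node → String
  parent_root : parent root = none
  parent_isSome : ∀ n, n ≠ root → (parent n).isSome
  reaches_root : ∀ n, Relation.ReflTransGen (fun c p => parent c = some p) n root
  pos_unique : ∀ a b p, parent a = some p → parent b = some p →
    tag a = tag b → pos a = pos b → a = b

/-- `c` is a child of `p`. -/
def HDT.IsChildOf (T : HDT) (c p : T.Node) : Prop := T.parent c = some p

/-- `d` is a strict descendant of `a`. -/
def HDT.IsDescOf (T : HDT) (d a : T.Node) : Prop := Relation.TransGen T.IsChildOf d a

/-- a leaf is a node with no children. -/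
def HDT.IsLeaf (T : HDT) (n : T.Node) : Prop := ∀ c, ¬ T.IsChildOf c n

/-- Column extraction programs:
`π ::= s | children(π,tag) | pchildren(π,tag,pos) | descendants(π,tag)`. -/
inductive ColProg where
  | id : ColProg
  | children : ColProg → String → ColProg
  | pchildren : ColProg → String → Nat → ColProg
  | descendants : ColProg → String → ColProg

/-- Semantics `[[π]]_{s,T}` of column extraction programs. -/
def evalCol (T : HDT) : ColProg → Set T.Node → Set T.Node
  | .id, s => s
  | .children π tg, s => {c | ∃ p ∈ evalCol T π s, T.IsChildOf c p ∧ T.tag c = tg}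
  | .pchildren π tg i, s =>
      {c | ∃ p ∈ evalCol T π s, T.IsChildOf c p ∧ T.tag c = tg ∧ T.pos c = i}
  | .descendants π tg, s => {d | ∃ a ∈ evalCol T π s, T.IsDescOf d a ∧ T.tag d = tg}

/-- A table with `k` columns: a finite set of `k`-tuples of data values. -/
abbrev Table (k : ℕ) := Finset (Fin k → String)

/-- `column(R,i)`: the set of values occurring in the i'th component of rows of `R`. -/
def tableColumn {k : ℕ} (R : Table k) (i : Fin k) : Set String := {v | ∃ r ∈ R, r i = v}

/-- `π` overapproximates `column(R,i)` on `T`: every value of the column is the data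
of some node extracted by `π` from `{root(T)}`. -/
def Overapprox (T : HDT) {k : ℕ} (R : Table k) (i : Fin k) (π : ColProg) : Prop :=
  ∀ v ∈ tableColumn R i, ∃ n ∈ evalCol T π {T.root}, T.data n = v
/-- The alphabet Σ of the constructed DFA: one symbol per column-extraction
operator (instantiated with a tag and, for `pchildren`, a position). -/
inductive ColSym where
  | children (tag : String)
  | pchildren (tag : String) (pos : Nat)
  | descendants (tag : String)

/-- The result of applying the operator named by a symbol to a set of nodes of `T`. -/
def applySym (T : HDT) (s : Set T.Node) : ColSym → Set T.Node
  | .children tg => {c | ∃ p ∈ s, T.IsChildOf c p ∧ T.tag c = tg}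
  | .pchildren tg i => {c | ∃ p ∈ s, T.IsChildOf c p ∧ T.tag c = tg ∧ T.pos c = i}
  | .descendants tg => {d | ∃ a ∈ s, T.IsDescOf d a ∧ T.tag d = tg}

/-- Applying the operators of a word in order, starting from `{root(T)}`. -/
def runWord (T : HDT) (w : List ColSym) : Set T.Node := w.foldl (applySym T) {T.root}

/-- The sets of nodes reachable from `{root(T)}` by repeatedly applying operators;
these are exactly the states of the constructed DFA. -/
def ReachableSet (T : HDT) (s : Set T.Node) : Prop := ∃ w : List ColSym, runWord T w = s

/-- The column extraction program `π_w` corresponding to a word `w`. -/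
def progOfWord (w : List ColSym) : ColProg :=
  w.foldl (fun π f =>
    match f with
    | .children tg => .children π tg
    | .pchildren tg i => .pchildren π tg i
    | .descendants tg => .descendants π tg) .id

/-- The word of operator symbols corresponding to a column extraction program. -/
def wordOfProg : ColProg → List ColSym
  | .id => []
  | .children π tg => wordOfProg π ++ [.children tg]
  | .pchildren π tg i => wordOfProg π ++ [.pchildren tg i]
  | .descendants π tg => wordOfProg π ++ [.descendants tg]

/-- A state `q_s` is accepting iff every value of `column(R,i)` equals the data
of some node in `s`. -/
def AcceptSet (T : HDT) {k : ℕ} (R : Table k) (i : Fin k) (s : Set T.Node) : Prop :=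
  ∀ v ∈ tableColumn R i, ∃ n ∈ s, T.data n = v

/-- `ConstructDFA(T,R,i)`: states are the reachable sets of nodes of `T`, the start
state is `q_{{root(T)}}`, the transition on symbol `f` applies the corresponding
operator, and `q_s` is accepting iff `s` overapproximates `column(R,i)`. -/
def constructDFA (T : HDT) {k : ℕ} (R : Table k) (i : Fin k) :
    DFA ColSym {s : Set T.Node // ReachableSet T s} where
  step := fun q f =>
    ⟨applySym T q.1 f, by
      obtain ⟨w, hw⟩ := q.2
      refine ⟨w ++ [f], ?_⟩
      simp only [runWord, List.foldl_append, List.foldl_cons, List.foldl_nil] at hw ⊢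
      rw [hw]⟩
  start := ⟨{T.root}, ⟨[], rfl⟩⟩
  accept := {q | AcceptSet T R i q.1}

/-- The product (intersection) automaton of a family of DFAs over a common alphabet:
states are tuples of component states, and a tuple is accepting iff every
component is accepting. -/
def productDFA {m : ℕ} {σ : Fin m → Type} (A : ∀ j, DFA ColSym (σ j)) :
    DFA ColSym (∀ j, σ j) where
  step := fun q f j => (A j).step (q j) f
  start := fun j => (A j).start
  accept := {q | ∀ j, q j ∈ (A j).accept}

theorem foldl_applySym_wordOfProg (T : HDT) (π : ColProg) (s : Set T.Node) :
    (wordOfProg π).foldl (applySym T) s = evalCol T π s := by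
  induction π with
  | id => rfl
  | children _ _ ih | pchildren _ _ _ ih | descendants _ _ ih =>
    simp only [wordOfProg, List.foldl_append, List.foldl_cons, List.foldl_nil, ih]
    rfl

theorem runWord_wordOfProg (T : HDT) (π : ColProg) :
    runWord T (wordOfProg π) = evalCol T π {T.root} :=
  foldl_applySym_wordOfProg T π {T.root}

section constructDFA

variable (T : HDT) {k : ℕ} (R : Table k) (i : Fin k)

theorem constructDFA_evalFrom_val (q : {s : Set T.Node // ReachableSet T s})
    (w : List ColSym) :
    ((constructDFA T R i).evalFrom q w).1 = w.foldl (applySym T) q.1 := by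
  induction w generalizing q with
  | nil => rfl
  | cons _ _ ih => exact ih _

theorem constructDFA_eval_val (w : List ColSym) :
    ((constructDFA T R i).eval w).1 = runWord T w :=
  constructDFA_evalFrom_val T R i _ w

theorem mem_constructDFA_accepts_iff (w : List ColSym) :
    w ∈ (constructDFA T R i).accepts ↔ AcceptSet T R i (runWord T w) := by
  rw [← constructDFA_eval_val T R i]
  rfl

end constructDFA

/-- The automaton `A = ConstructDFA(T,R,i)` accepts a column extraction
program `π` if and only if `π` overapproximates `column(R,i)` on `T`, i.e. every
value in `column(R,i)` equals `n.data` for some node `n ∈ [[π]]_{{root(T)},T}`. -/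
theorem constructDFA_accepts_iff_overapprox
    (T : HDT) {k : ℕ} (R : Table k) (i : Fin k) (π : ColProg) :
    wordOfProg π ∈ (constructDFA T R i).accepts ↔ Overapprox T R i π := by
  rw [mem_constructDFA_accepts_iff, runWord_wordOfProg]
  rfl
end

section
/- Let α be a type, E+ and E− finite subsets of α, and P a finite set of predicates p : α → Bool. Suppose some Boolean combination of P is true on every element of E+ and false on every element of E−. Then the minimum, over all Boolean combinations F of P that are true on all of E+ and false on all of E−, of the number of distinct predicates of P occurring in F equals the minimum cardinality of a subset S ⊆ P that distinguishes every pair in E+ × E−; moreover a minimizing F can be chosen in disjunctive normal form over a minimum distinguishing subset. -/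
/-- Boolean formulas over `N` predicate variables: Boolean combinations built with
conjunction, disjunction and negation (with the constant combinations included). -/
inductive BF (N : ℕ) where
  | tt : BF N
  | ff : BF N
  | var (k : Fin N) : BF N
  | not (f : BF N) : BF N
  | and (f g : BF N) : BF N
  | or (f g : BF N) : BF N

/-- Evaluation of a Boolean formula on a valuation of the variables. -/
def BF.evalBF {N : ℕ} : BF N → (Fin N → Bool) → Bool
  | .tt, _ => true
  | .ff, _ => false
  | .var k, v => v k
  | .not f, v => ! f.evalBF v
  | .and f g, v => f.evalBF v && g.evalBF v
  | .or f g, v => f.evalBF v || g.evalBF v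

/-- The set of (indices of) predicates of `P` occurring in a Boolean combination. -/
def BF.vars {N : ℕ} : BF N → Finset (Fin N)
  | .tt => ∅
  | .ff => ∅
  | .var k => {k}
  | .not f => f.vars
  | .and f g => f.vars ∪ g.vars
  | .or f g => f.vars ∪ g.vars

/-- Literals: variables and their negations. -/
inductive BF.IsLit {N : ℕ} : BF N → Prop
  | var (k : Fin N) : BF.IsLit (.var k)
  | nvar (k : Fin N) : BF.IsLit (.not (.var k))

/-- Finite conjunctions of literals. -/
inductive BF.IsConj {N : ℕ} : BF N → Prop
  | tt : BF.IsConj .tt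
  | lit {f : BF N} : BF.IsLit f → BF.IsConj f
  | and {f g : BF N} : BF.IsConj f → BF.IsConj g → BF.IsConj (.and f g)

/-- Disjunctive normal form: a finite disjunction of finite conjunctions of
predicates and their negations. -/
inductive BF.IsDNF {N : ℕ} : BF N → Prop
  | ff : BF.IsDNF .ff
  | conj {f : BF N} : BF.IsConj f → BF.IsDNF f
  | or {f g : BF N} : BF.IsDNF f → BF.IsDNF g → BF.IsDNF (.or f g)

/-- `F` is true on every element of `E⁺` and false on every element of `E⁻`. -/
def SeparatesBF {α : Type*} {N : ℕ} (Ep En : Finset α) (P : Fin N → α → Bool)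
    (F : BF N) : Prop :=
  (∀ e ∈ Ep, F.evalBF (fun k => P k e) = true) ∧
  (∀ e ∈ En, F.evalBF (fun k => P k e) = false)

/-- The subset `S` of predicates distinguishes every pair in `E⁺ × E⁻`. -/
def DistinguishesIdx {α : Type*} {N : ℕ} (Ep En : Finset α) (P : Fin N → α → Bool)
    (S : Finset (Fin N)) : Prop :=
  ∀ ep ∈ Ep, ∀ en ∈ En, ∃ k ∈ S, P k ep ≠ P k en

/-!
The predicates occurring in a separating formula `F` distinguish every pair of `E⁺ × E⁻`,
since `F` takes different values at the two points and its value only depends on those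
predicates. Conversely, a distinguishing set `S` yields the separating DNF
`⋁_{e ∈ E⁺} ⋀_{k ∈ S} (P k = P k e)`, whose predicates lie in `S`. Hence the two minima agree,
and the DNF built from a minimum distinguishing set attains them.
-/

namespace BF

variable {N : ℕ}

theorem evalBF_congr (F : BF N) {v w : Fin N → Bool} (h : ∀ k ∈ F.vars, v k = w k) :
    F.evalBF v = F.evalBF w := by
  induction F with
  | tt | ff => rfl
  | var k => exact h k (Finset.mem_singleton_self k)
  | not f ih => simp only [evalBF, ih h]
  | and f g ihf ihg | or f g ihf ihg =>
    simp only [vars, Finset.mem_union] at h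
    simp only [evalBF, ihf fun k hk => h k (.inl hk), ihg fun k hk => h k (.inr hk)]

def lit (k : Fin N) (b : Bool) : BF N :=
  if b then .var k else .not (.var k)

theorem isLit_lit (k : Fin N) (b : Bool) : (lit k b).IsLit := by
  cases b
  · exact .nvar k
  · exact .var k

theorem evalBF_lit (k : Fin N) (b : Bool) (v : Fin N → Bool) :
    (lit k b).evalBF v = true ↔ v k = b := by
  cases b <;> simp [lit, evalBF]

theorem vars_lit (k : Fin N) (b : Bool) : (lit k b).vars = {k} := by
  cases b <;> rfl

def bigAnd (fs : List (BF N)) : BF N :=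
  fs.foldr .and .tt

def bigOr (fs : List (BF N)) : BF N :=
  fs.foldr .or .ff

theorem isConj_bigAnd {fs : List (BF N)} (h : ∀ f ∈ fs, f.IsConj) : (bigAnd fs).IsConj := by
  induction fs with
  | nil => exact .tt
  | cons f fs ih =>
    rw [List.forall_mem_cons] at h
    exact .and h.1 (ih h.2)

theorem isDNF_bigOr {fs : List (BF N)} (h : ∀ f ∈ fs, f.IsConj) : (bigOr fs).IsDNF := by
  induction fs with
  | nil => exact .ff
  | cons f fs ih =>
    rw [List.forall_mem_cons] at h
    exact .or (.conj h.1) (ih h.2)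

theorem evalBF_bigAnd (fs : List (BF N)) (v : Fin N → Bool) :
    (bigAnd fs).evalBF v = true ↔ ∀ f ∈ fs, f.evalBF v = true := by
  induction fs with
  | nil => simp [bigAnd, evalBF]
  | cons f fs ih => simp [bigAnd, evalBF, ← ih]

theorem evalBF_bigOr (fs : List (BF N)) (v : Fin N → Bool) :
    (bigOr fs).evalBF v = true ↔ ∃ f ∈ fs, f.evalBF v = true := by
  induction fs with
  | nil => simp [bigOr, evalBF]
  | cons f fs ih => simp [bigOr, evalBF, ← ih]

theorem vars_bigAnd_subset {fs : List (BF N)} {S : Finset (Fin N)}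
    (h : ∀ f ∈ fs, f.vars ⊆ S) : (bigAnd fs).vars ⊆ S := by
  induction fs with
  | nil => exact Finset.empty_subset S
  | cons f fs ih =>
    rw [List.forall_mem_cons] at h
    exact Finset.union_subset h.1 (ih h.2)

theorem vars_bigOr_subset {fs : List (BF N)} {S : Finset (Fin N)}
    (h : ∀ f ∈ fs, f.vars ⊆ S) : (bigOr fs).vars ⊆ S := by
  induction fs with
  | nil => exact Finset.empty_subset S
  | cons f fs ih =>
    rw [List.forall_mem_cons] at h
    exact Finset.union_subset h.1 (ih h.2)

noncomputable def cube (S : Finset (Fin N)) (v : Fin N → Bool) : BF N :=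
  bigAnd (S.toList.map fun k => lit k (v k))

theorem isConj_cube (S : Finset (Fin N)) (v : Fin N → Bool) : (cube S v).IsConj :=
  isConj_bigAnd <| by
    simp only [List.mem_map]
    rintro _ ⟨k, -, rfl⟩
    exact .lit (isLit_lit k (v k))

theorem evalBF_cube (S : Finset (Fin N)) (v w : Fin N → Bool) :
    (cube S v).evalBF w = true ↔ ∀ k ∈ S, w k = v k := by
  simp [cube, evalBF_bigAnd, evalBF_lit]

theorem vars_cube_subset (S : Finset (Fin N)) (v : Fin N → Bool) : (cube S v).vars ⊆ S :=
  vars_bigAnd_subset <| by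
    simp only [List.mem_map, Finset.mem_toList]
    rintro _ ⟨k, hk, rfl⟩
    simpa [vars_lit] using hk

end BF

section

variable {α : Type*} {Ep En : Finset α} {N : ℕ} {P : Fin N → α → Bool}

theorem SeparatesBF.distinguishesIdx_vars {F : BF N} (hF : SeparatesBF Ep En P F) :
    DistinguishesIdx Ep En P F.vars := by
  intro ep hep en hen
  by_contra! hagree
  have heval := F.evalBF_congr hagree
  rw [hF.1 ep hep, hF.2 en hen] at heval
  exact Bool.noConfusion heval

theorem DistinguishesIdx.exists_isDNF_separatesBF {S : Finset (Fin N)}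
    (hS : DistinguishesIdx Ep En P S) :
    ∃ F : BF N, F.IsDNF ∧ F.vars ⊆ S ∧ SeparatesBF Ep En P F := by
  refine ⟨BF.bigOr (Ep.toList.map fun e => BF.cube S fun k => P k e), ?_, ?_, ?_, ?_⟩
  · exact BF.isDNF_bigOr <| by
      simp only [List.mem_map]
      rintro _ ⟨e, -, rfl⟩
      exact BF.isConj_cube _ _
  · exact BF.vars_bigOr_subset <| by
      simp only [List.mem_map]
      rintro _ ⟨e, -, rfl⟩
      exact BF.vars_cube_subset _ _
  · intro e he
    rw [BF.evalBF_bigOr]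
    exact ⟨_, List.mem_map.2 ⟨e, Finset.mem_toList.2 he, rfl⟩,
      (BF.evalBF_cube _ _ _).2 fun _ _ => rfl⟩
  · intro en hen
    rw [← Bool.not_eq_true, BF.evalBF_bigOr]
    simp only [List.mem_map, Finset.mem_toList]
    rintro ⟨_, ⟨ep, hep, rfl⟩, hcube⟩
    obtain ⟨k, hk, hne⟩ := hS ep hep en hen
    exact hne ((BF.evalBF_cube _ _ _).1 hcube k hk).symm

end

/-- Suppose some Boolean combination of `P` is true on all of `E⁺` and
false on all of `E⁻`. Then the minimum, over all such separating Boolean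
combinations `F`, of the number of distinct predicates of `P` occurring in `F`
equals the minimum cardinality of a subset `S ⊆ P` that distinguishes every pair in
`E⁺ × E⁻`; moreover a minimizing `F` can be chosen in disjunctive normal form over
a minimum distinguishing subset. -/
theorem min_predicates_of_classifier_eq_min_distinguishing_subset
    {α : Type*} (Ep En : Finset α) {N : ℕ} (P : Fin N → α → Bool)
    (hsep : ∃ F : BF N, SeparatesBF Ep En P F) :
    sInf {c : ℕ | ∃ F : BF N, SeparatesBF Ep En P F ∧ c = F.vars.card} =
        sInf {c : ℕ | ∃ S : Finset (Fin N), DistinguishesIdx Ep En P S ∧ c = S.card} ∧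
      ∃ (S : Finset (Fin N)) (F : BF N),
        DistinguishesIdx Ep En P S ∧
        S.card = sInf {c : ℕ | ∃ S' : Finset (Fin N),
          DistinguishesIdx Ep En P S' ∧ c = S'.card} ∧
        F.IsDNF ∧ F.vars ⊆ S ∧ SeparatesBF Ep En P F ∧
        F.vars.card = sInf {c : ℕ | ∃ F' : BF N,
          SeparatesBF Ep En P F' ∧ c = F'.vars.card} := by
  set A := {c : ℕ | ∃ F : BF N, SeparatesBF Ep En P F ∧ c = F.vars.card}
  set B := {c : ℕ | ∃ S : Finset (Fin N), DistinguishesIdx Ep En P S ∧ c = S.card}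
  obtain ⟨F₀, hF₀⟩ := hsep
  have hA : A.Nonempty := ⟨_, F₀, hF₀, rfl⟩
  have hB : B.Nonempty := ⟨_, F₀.vars, hF₀.distinguishesIdx_vars, rfl⟩
  have hBA : sInf B ≤ sInf A := le_csInf hA <| by
    rintro _ ⟨F', hF', rfl⟩
    exact Nat.sInf_le ⟨_, hF'.distinguishesIdx_vars, rfl⟩
  obtain ⟨S, hS, hSB⟩ := Nat.sInf_mem hB
  obtain ⟨F, hFdnf, hFS, hF⟩ := hS.exists_isDNF_separatesBF
  have hAF : sInf A ≤ F.vars.card := Nat.sInf_le ⟨F, hF, rfl⟩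
  have hFS' : F.vars.card ≤ S.card := Finset.card_le_card hFS
  have hFA : F.vars.card = sInf A := by omega
  exact ⟨by omega, S, F, hS, hSB.symm, hFdnf, hFS, hF, hFA⟩
end
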